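/- arXiv:1411.2244 — 5 statements merged into one kernel-verified Lean document; each statement's English description precedes it below -/
import Mathlib

section
/- For any finite sequence of real numbers a_1, ..., a_n, the maximum of Σ_i ε_i a_i over all sign vectors (ε_1,...,ε_n) ∈ {-1,+1}^n having an even number of -1's equals Σ_i |a_i| - 2·min_i |a_i| if a_1·a_2·...·a_n < 0, and equals Σ_i |a_i| otherwise. -/
open Finset

/-- Number of minus signs in a sign vector (encoded as a Boolean vector,
`true` meaning the sign `-1`). -/
def negCount {ι : Type*} [Fintype ι] [DecidableEq ι] (ε : ι → Bool) : ℕ :=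
  (Finset.univ.filter (fun i => ε i = true)).card

/-- The signed sum `Σ ε_i a_i` corresponding to a sign vector. -/
def sgnSum {ι : Type*} [Fintype ι] (a : ι → ℝ) (ε : ι → Bool) : ℝ :=
  ∑ i, (if ε i then -(a i) else a i)

/-- Sign vectors with an even number of `-1`'s. -/
def evenSigns (ι : Type*) [Fintype ι] [DecidableEq ι] : Finset (ι → Bool) :=
  Finset.univ.filter (fun ε => Even (negCount ε))

/-- Sign vectors with an odd number of `-1`'s. -/
def oddSigns (ι : Type*) [Fintype ι] [DecidableEq ι] : Finset (ι → Bool) :=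
  Finset.univ.filter (fun ε => Odd (negCount ε))

lemma evenSigns_nonempty (ι : Type*) [Fintype ι] [DecidableEq ι] :
    (evenSigns ι).Nonempty :=
  ⟨fun _ => false, by
    refine Finset.mem_filter.mpr ⟨Finset.mem_univ _, ?_⟩
    simp [negCount]⟩

lemma oddSigns_nonempty (ι : Type*) [Fintype ι] [DecidableEq ι] [Nonempty ι] :
    (oddSigns ι).Nonempty := by
  refine ⟨fun i => decide (i = Classical.arbitrary ι), ?_⟩
  refine Finset.mem_filter.mpr ⟨Finset.mem_univ _, ?_⟩
  simp [negCount, Finset.filter_eq']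

/-- `s_even`: maximum of signed sums over sign vectors with evenly many minuses. -/
noncomputable def sEven {ι : Type*} [Fintype ι] [DecidableEq ι] (a : ι → ℝ) : ℝ :=
  (evenSigns ι).sup' (evenSigns_nonempty ι) (sgnSum a)

/-- `s_odd`: maximum of signed sums over sign vectors with oddly many minuses. -/
noncomputable def sOdd {ι : Type*} [Fintype ι] [DecidableEq ι] [Nonempty ι] (a : ι → ℝ) : ℝ :=
  (oddSigns ι).sup' (oddSigns_nonempty ι) (sgnSum a)

/-! The unconstrained maximum `∑ |a i|` is attained by the sign vector `signsOf a` that negates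
exactly the negative entries, and any sign vector differing from it at `i` loses at least
`2 |a i|`. The parity of `signsOf a` is that of the number of negative entries, which decides the
sign of `∏ a i` when no entry vanishes. If it is odd, the best even vector flips the sign of a
smallest `|a i|`; a zero entry makes that flip free. -/

noncomputable def signsOf {ι : Type*} (a : ι → ℝ) : ι → Bool := fun i => decide (a i < 0)

section SignedTerm

variable (b : Bool) (x : ℝ)

lemma ite_neg_le_abs : (if b then -x else x) ≤ |x| := by
  cases b
  · exact le_abs_self x
  · exact neg_le_abs x

lemma ite_decide_neg_eq_abs : (if decide (x < 0) then -x else x) = |x| := by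
  by_cases hx : x < 0
  · simp [hx, abs_of_neg hx]
  · simp [hx, abs_of_nonneg (not_lt.mp hx)]

lemma ite_neg_eq_neg_abs_of_ne {b : Bool} {x : ℝ} (h : b ≠ decide (x < 0)) :
    (if b then -x else x) = -|x| := by
  by_cases hx : x < 0
  · simp_all [abs_of_neg hx]
  · simp_all [abs_of_nonneg (not_lt.mp hx)]

end SignedTerm

section SignedSum

variable {ι : Type*} [Fintype ι]

lemma sgnSum_le_sum_abs (a : ι → ℝ) (ε : ι → Bool) : sgnSum a ε ≤ ∑ i, |a i| :=
  sum_le_sum fun i _ => ite_neg_le_abs (ε i) (a i)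

lemma sgnSum_signsOf (a : ι → ℝ) : sgnSum a (signsOf a) = ∑ i, |a i| :=
  sum_congr rfl fun i _ => ite_decide_neg_eq_abs (a i)

variable [DecidableEq ι]

lemma even_negCount_update_not_iff (ε : ι → Bool) (j : ι) :
    Even (negCount (Function.update ε j (!ε j))) ↔ Odd (negCount ε) := by
  have hcount : ∀ ε : ι → Bool, negCount ε = (if ε j then 1 else 0) +
      ∑ i ∈ univ.erase j, if ε i then 1 else 0 := fun ε => by
    rw [negCount, card_filter, ← add_sum_erase _ _ (mem_univ j)]
  have hrest : ∑ i ∈ univ.erase j, (if Function.update ε j (!ε j) i then 1 else 0) =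
      ∑ i ∈ univ.erase j, if ε i then 1 else 0 :=
    sum_congr rfl fun i hi => by rw [Function.update_of_ne (ne_of_mem_erase hi)]
  rw [hcount, hcount ε, hrest, Function.update_self, ← Nat.not_even_iff_odd]
  cases ε j <;> simp [parity_simps]

lemma sgnSum_update (a : ι → ℝ) (ε : ι → Bool) (j : ι) (b : Bool) :
    sgnSum a (Function.update ε j b) =
      sgnSum a ε - (if ε j then -a j else a j) + (if b then -a j else a j) := by
  simp only [sgnSum]
  rw [← add_sum_erase _ _ (mem_univ j), ← add_sum_erase _ _ (mem_univ j), Function.update_self,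
    sum_congr rfl fun i hi => by rw [Function.update_of_ne (ne_of_mem_erase hi)]]
  ring

lemma sgnSum_update_signsOf (a : ι → ℝ) (j : ι) :
    sgnSum a (Function.update (signsOf a) j (!signsOf a j)) = ∑ i, |a i| - 2 * |a j| := by
  rw [sgnSum_update, sgnSum_signsOf, signsOf, ite_decide_neg_eq_abs,
    ite_neg_eq_neg_abs_of_ne (Bool.not_ne_self _)]
  ring

lemma sgnSum_le_of_ne_signsOf (a : ι → ℝ) {ε : ι → Bool} {i : ι} (h : ε i ≠ signsOf a i) :
    sgnSum a ε ≤ ∑ k, |a k| - 2 * |a i| := by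
  have hle := sgnSum_le_sum_abs a (Function.update ε i (signsOf a i))
  rw [sgnSum_update, ite_neg_eq_neg_abs_of_ne h, signsOf, ite_decide_neg_eq_abs] at hle
  linarith

lemma prod_eq_neg_one_pow_mul_prod_abs (a : ι → ℝ) :
    ∏ i, a i = (-1) ^ negCount (signsOf a) * ∏ i, |a i| := by
  have hsign : ∀ i, a i = (if signsOf a i then -1 else 1) * |a i| := fun i => by
    rw [ite_mul, neg_one_mul, one_mul, ← ite_decide_neg_eq_abs (a i), signsOf]
    split_ifs <;> simp
  rw [prod_congr rfl fun i _ => hsign i, prod_mul_distrib, prod_ite, prod_const, prod_const_one,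
    mul_one, negCount]

lemma prod_lt_zero_iff (a : ι → ℝ) :
    ∏ i, a i < 0 ↔ (∀ i, a i ≠ 0) ∧ Odd (negCount (signsOf a)) := by
  rw [prod_eq_neg_one_pow_mul_prod_abs]
  have habs : 0 ≤ ∏ i, |a i| := prod_nonneg fun i _ => abs_nonneg (a i)
  rcases Nat.even_or_odd (negCount (signsOf a)) with hn | hn
  · rw [hn.neg_one_pow, one_mul]
    exact iff_of_false habs.not_gt fun h => Nat.not_odd_iff_even.mpr hn h.2
  · rw [hn.neg_one_pow, neg_one_mul, neg_lt_zero, habs.lt_iff_ne', prod_ne_zero_iff]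
    simp [hn]

end SignedSum

section SEven

variable {ι : Type*} [Fintype ι] [DecidableEq ι] (a : ι → ℝ)

lemma sEven_le_sum_abs : sEven a ≤ ∑ i, |a i| :=
  sup'_le _ _ fun ε _ => sgnSum_le_sum_abs a ε

lemma sEven_eq_of_even (h : Even (negCount (signsOf a))) : sEven a = ∑ i, |a i| :=
  le_antisymm (sEven_le_sum_abs a)
    (sgnSum_signsOf a ▸ le_sup' (sgnSum a) (mem_filter.mpr ⟨mem_univ _, h⟩))

lemma sEven_eq_of_odd [Nonempty ι] (h : Odd (negCount (signsOf a))) :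
    sEven a = ∑ i, |a i| - 2 * univ.inf' univ_nonempty (fun i => |a i|) := by
  obtain ⟨j, -, hj⟩ := exists_mem_eq_inf' univ_nonempty (fun i => |a i|)
  rw [hj]
  refine le_antisymm (sup'_le _ _ fun ε hε => ?_) ?_
  · obtain ⟨i, hi⟩ : ∃ i, ε i ≠ signsOf a i := by
      by_contra! hεa
      exact Nat.not_even_iff_odd.mpr h (funext hεa ▸ (mem_filter.mp hε).2)
    have hji : |a j| ≤ |a i| := hj ▸ inf'_le _ (mem_univ i)
    linarith [sgnSum_le_of_ne_signsOf a hi]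
  · have hflip : Function.update (signsOf a) j (!signsOf a j) ∈ evenSigns ι :=
      mem_filter.mpr ⟨mem_univ _, (even_negCount_update_not_iff _ _).mpr h⟩
    exact sgnSum_update_signsOf a j ▸ le_sup' (sgnSum a) hflip

end SEven

theorem sEven_eq {ι : Type*} [Fintype ι] [DecidableEq ι] [Nonempty ι] (a : ι → ℝ) :
    ((∏ i, a i) < 0 →
      sEven a = ∑ i, |a i| - 2 * Finset.univ.inf' Finset.univ_nonempty (fun i => |a i|)) ∧
    (¬ ((∏ i, a i) < 0) → sEven a = ∑ i, |a i|) := by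
  refine ⟨fun hneg => sEven_eq_of_odd a ((prod_lt_zero_iff a).1 hneg).2, fun hnonneg => ?_⟩
  rcases Nat.even_or_odd (negCount (signsOf a)) with heven | hodd
  · exact sEven_eq_of_even a heven
  · obtain ⟨j, hj⟩ : ∃ j, a j = 0 := by
      by_contra! hne
      exact hnonneg ((prod_lt_zero_iff a).2 ⟨hne, hodd⟩)
    have hmin : univ.inf' univ_nonempty (fun i => |a i|) = 0 :=
      le_antisymm ((inf'_le _ (mem_univ j)).trans_eq (by rw [hj, abs_zero]))
        (le_inf' _ _ fun i _ => abs_nonneg (a i))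
    rw [sEven_eq_of_odd a hodd, hmin, mul_zero, sub_zero]
end

section
/- If A_1, A_2, B_1, B_2 are jointly distributed {-1,+1}-valued random variables, then |E[A_1 B_1] + E[A_1 B_2] + E[A_2 B_1] - E[A_2 B_2]| ≤ 2 (the CHSH inequality). -/
open MeasureTheory

lemma chsh_integrable {Ω : Type*} [MeasurableSpace Ω] (μ : Measure Ω)
    [IsProbabilityMeasure μ] (A B : Ω → ℝ)
    (hA : ∀ ω, A ω = 1 ∨ A ω = -1) (hB : ∀ ω, B ω = 1 ∨ B ω = -1)
    (mA : Measurable A) (mB : Measurable B) :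
    Integrable (fun ω => A ω * B ω) μ := by
  refine Integrable.mono' (integrable_const 1) ((mA.mul mB).aestronglyMeasurable) ?_
  filter_upwards with ω
  rcases hA ω with h1 | h1 <;> rcases hB ω with h2 | h2 <;>
    simp [h1, h2, abs_le] <;> norm_num

/-- The CHSH inequality for four jointly distributed `±1`-valued random variables. -/
theorem chsh_inequality
    {Ω : Type*} [MeasurableSpace Ω] (μ : Measure Ω) [IsProbabilityMeasure μ]
    (A₁ A₂ B₁ B₂ : Ω → ℝ)
    (hA₁ : ∀ ω, A₁ ω = 1 ∨ A₁ ω = -1) (hA₂ : ∀ ω, A₂ ω = 1 ∨ A₂ ω = -1)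
    (hB₁ : ∀ ω, B₁ ω = 1 ∨ B₁ ω = -1) (hB₂ : ∀ ω, B₂ ω = 1 ∨ B₂ ω = -1)
    (mA₁ : Measurable A₁) (mA₂ : Measurable A₂)
    (mB₁ : Measurable B₁) (mB₂ : Measurable B₂) :
    |(∫ ω, A₁ ω * B₁ ω ∂μ) + (∫ ω, A₁ ω * B₂ ω ∂μ)
      + (∫ ω, A₂ ω * B₁ ω ∂μ) - (∫ ω, A₂ ω * B₂ ω ∂μ)| ≤ 2 := by
  have i11 := chsh_integrable μ A₁ B₁ hA₁ hB₁ mA₁ mB₁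
  have i12 := chsh_integrable μ A₁ B₂ hA₁ hB₂ mA₁ mB₂
  have i21 := chsh_integrable μ A₂ B₁ hA₂ hB₁ mA₂ mB₁
  have i22 := chsh_integrable μ A₂ B₂ hA₂ hB₂ mA₂ mB₂
  have hcomb : (∫ ω, A₁ ω * B₁ ω ∂μ) + (∫ ω, A₁ ω * B₂ ω ∂μ)
      + (∫ ω, A₂ ω * B₁ ω ∂μ) - (∫ ω, A₂ ω * B₂ ω ∂μ)
      = ∫ ω, (A₁ ω * B₁ ω + A₁ ω * B₂ ω + A₂ ω * B₁ ω - A₂ ω * B₂ ω) ∂μ := by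
    have is2 : Integrable (fun ω => A₁ ω * B₁ ω + A₁ ω * B₂ ω) μ := i11.add i12
    have is3 : Integrable (fun ω => A₁ ω * B₁ ω + A₁ ω * B₂ ω + A₂ ω * B₁ ω) μ :=
      is2.add i21
    rw [← integral_add i11 i12, ← integral_add is2 i21, ← integral_sub is3 i22]
  rw [hcomb]
  calc |∫ ω, (A₁ ω * B₁ ω + A₁ ω * B₂ ω + A₂ ω * B₁ ω - A₂ ω * B₂ ω) ∂μ|
      ≤ ∫ ω, |A₁ ω * B₁ ω + A₁ ω * B₂ ω + A₂ ω * B₁ ω - A₂ ω * B₂ ω| ∂μ :=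
        by
        simpa [Real.norm_eq_abs] using
          norm_integral_le_integral_norm
            (fun ω => A₁ ω * B₁ ω + A₁ ω * B₂ ω + A₂ ω * B₁ ω - A₂ ω * B₂ ω) (μ := μ)
    _ ≤ ∫ _ω, (2 : ℝ) ∂μ := by
        refine integral_mono_of_nonneg (Filter.Eventually.of_forall fun ω => abs_nonneg _)
          (integrable_const 2) (Filter.Eventually.of_forall fun ω => ?_)
        rcases hA₁ ω with h1 | h1 <;> rcases hA₂ ω with h2 | h2 <;>
          rcases hB₁ ω with h3 | h3 <;> rcases hB₂ ω with h4 | h4 <;>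
          simp [h1, h2, h3, h4, abs_le] <;> norm_num
    _ = 2 := by simp
end

section
/- If X_1, X_2, X_3 are jointly distributed {-1,+1}-valued random variables, then -1 ≤ E[X_1 X_2] + E[X_2 X_3] + E[X_3 X_1] and E[X_1 X_2] + E[X_2 X_3] + E[X_3 X_1] ≤ 1 + 2·max(E[X_1 X_2], E[X_2 X_3], E[X_3 X_1]) (the Suppes–Zanotti inequalities). -/
open MeasureTheory

private lemma sz_integrable {Ω : Type*} [MeasurableSpace Ω] (μ : Measure Ω)
    [IsProbabilityMeasure μ] (X Y : Ω → ℝ)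
    (hX : ∀ ω, X ω = 1 ∨ X ω = -1) (hY : ∀ ω, Y ω = 1 ∨ Y ω = -1)
    (mX : Measurable X) (mY : Measurable Y) :
    Integrable (fun ω => X ω * Y ω) μ := by
  refine ⟨(mX.mul mY).aestronglyMeasurable, ?_⟩
  apply HasFiniteIntegral.of_bounded (C := 1)
  filter_upwards with ω
  rcases hX ω with hx | hx <;> rcases hY ω with hy | hy <;> simp [hx, hy]

/-- The Suppes–Zanotti inequalities for three jointly distributed `±1`-valued
random variables. -/
theorem suppes_zanotti
    {Ω : Type*} [MeasurableSpace Ω] (μ : Measure Ω) [IsProbabilityMeasure μ]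
    (X₁ X₂ X₃ : Ω → ℝ)
    (h₁ : ∀ ω, X₁ ω = 1 ∨ X₁ ω = -1)
    (h₂ : ∀ ω, X₂ ω = 1 ∨ X₂ ω = -1)
    (h₃ : ∀ ω, X₃ ω = 1 ∨ X₃ ω = -1)
    (m₁ : Measurable X₁) (m₂ : Measurable X₂) (m₃ : Measurable X₃) :
    (-1 ≤ (∫ ω, X₁ ω * X₂ ω ∂μ) + (∫ ω, X₂ ω * X₃ ω ∂μ) + (∫ ω, X₃ ω * X₁ ω ∂μ)) ∧
    ((∫ ω, X₁ ω * X₂ ω ∂μ) + (∫ ω, X₂ ω * X₃ ω ∂μ) + (∫ ω, X₃ ω * X₁ ω ∂μ) ≤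
      1 + 2 * max (max (∫ ω, X₁ ω * X₂ ω ∂μ) (∫ ω, X₂ ω * X₃ ω ∂μ)) (∫ ω, X₃ ω * X₁ ω ∂μ)) := by
  have i12 := sz_integrable μ X₁ X₂ h₁ h₂ m₁ m₂
  have i23 := sz_integrable μ X₂ X₃ h₂ h₃ m₂ m₃
  have i31 := sz_integrable μ X₃ X₁ h₃ h₁ m₃ m₁
  have hsum : (∫ ω, X₁ ω * X₂ ω ∂μ) + (∫ ω, X₂ ω * X₃ ω ∂μ) + (∫ ω, X₃ ω * X₁ ω ∂μ)
      = ∫ ω, (X₁ ω * X₂ ω + X₂ ω * X₃ ω + X₃ ω * X₁ ω) ∂μ := by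
    rw [← integral_add i12 i23, ← integral_add (μ := μ) (f := fun ω => X₁ ω * X₂ ω + X₂ ω * X₃ ω) (i12.add i23) i31]
  constructor
  · rw [hsum]
    have : (-1 : ℝ) = ∫ _ω, (-1 : ℝ) ∂μ := by simp
    rw [this]
    apply integral_mono (integrable_const _) ((i12.add i23).add i31)
    intro ω
    rcases h₁ ω with hx | hx <;> rcases h₂ ω with hy | hy <;> rcases h₃ ω with hz | hz <;>
      simp [hx, hy, hz] <;> norm_num
  · have key : (∫ ω, X₁ ω * X₂ ω ∂μ) + (∫ ω, X₂ ω * X₃ ω ∂μ) + (∫ ω, X₃ ω * X₁ ω ∂μ)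
        ≤ 1 + 2 * (∫ ω, X₁ ω * X₂ ω ∂μ) := by
      have h' : (∫ ω, (X₂ ω * X₃ ω + X₃ ω * X₁ ω - X₁ ω * X₂ ω) ∂μ) ≤ 1 := by
        have : (1 : ℝ) = ∫ _ω, (1 : ℝ) ∂μ := by simp
        rw [this]
        apply integral_mono ((i23.add i31).sub i12) (integrable_const _)
        intro ω
        rcases h₁ ω with hx | hx <;> rcases h₂ ω with hy | hy <;> rcases h₃ ω with hz | hz <;>
          simp [hx, hy, hz] <;> norm_num
      have e : (∫ ω, X₂ ω * X₃ ω ∂μ) + (∫ ω, X₃ ω * X₁ ω ∂μ) - (∫ ω, X₁ ω * X₂ ω ∂μ)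
          = ∫ ω, (X₂ ω * X₃ ω + X₃ ω * X₁ ω - X₁ ω * X₂ ω) ∂μ := by
        rw [← integral_add i23 i31, ← integral_sub (μ := μ) (f := fun ω => X₂ ω * X₃ ω + X₃ ω * X₁ ω) (i23.add i31) i12]
      rw [← e] at h'
      linarith
    have hle : (∫ ω, X₁ ω * X₂ ω ∂μ) ≤
        max (max (∫ ω, X₁ ω * X₂ ω ∂μ) (∫ ω, X₂ ω * X₃ ω ∂μ)) (∫ ω, X₃ ω * X₁ ω ∂μ) :=
      le_max_of_le_left (le_max_left _ _)
    linarith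
end

section
/- If X_1, ..., X_5 are jointly distributed {-1,+1}-valued random variables such that Pr[X_i = 1, X_{i⊕1} = 1] = 0 for all i (cyclically), then Σ_{i=1}^5 Pr[X_i = 1] ≤ 2 (the KCBS inequality). -/
/-!
Outside a null set, the indices `i` with `X i ω = 1` form an independent set of the
5-cycle, so at most two of them occur at each `ω`. Integrating the pointwise bound
`∑ i, 1{X i = 1} ≤ 2` gives the inequality.
-/

open MeasureTheory Finset

theorem card_le_two_of_forall_add_one_notMem :
    ∀ S : Finset (Fin 5), (∀ i ∈ S, i + 1 ∉ S) → #S ≤ 2 := by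
  decide

open scoped Classical in
theorem sum_measure_le_mul_measure_univ_of_ae_card_le {Ω ι : Type*} [MeasurableSpace Ω]
    {μ : Measure Ω} {s : Finset ι} {A : ι → Set Ω} (hA : ∀ i ∈ s, MeasurableSet (A i)) {k : ℕ}
    (hk : ∀ᵐ ω ∂μ, #{i ∈ s | ω ∈ A i} ≤ k) :
    ∑ i ∈ s, μ (A i) ≤ k * μ Set.univ := by
  have hcount (ω : Ω) : ∑ i ∈ s, (A i).indicator 1 ω = (#{i ∈ s | ω ∈ A i} : ENNReal) := by
    simp [Set.indicator_apply]
  calc ∑ i ∈ s, μ (A i)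
      = ∫⁻ ω, ∑ i ∈ s, (A i).indicator 1 ω ∂μ := by
        rw [lintegral_finsetSum' _ fun i hi => (measurable_one.indicator (hA i hi)).aemeasurable]
        exact sum_congr rfl fun i hi => (lintegral_indicator_one (hA i hi)).symm
    _ ≤ ∫⁻ _, (k : ENNReal) ∂μ :=
        lintegral_mono_ae <| hk.mono fun ω hω => by rw [hcount]; exact_mod_cast hω
    _ = k * μ Set.univ := lintegral_const _

theorem kcbs_inequality_general
    {Ω : Type*} [MeasurableSpace Ω] (μ : Measure Ω) [IsProbabilityMeasure μ]
    (X : Fin 5 → Ω → ℝ)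
    (hm : ∀ i, Measurable (X i))
    (hexcl : ∀ i : Fin 5, μ {ω | X i ω = 1 ∧ X (i + 1) ω = 1} = 0) :
    ∑ i : Fin 5, (μ {ω | X i ω = 1}).toReal ≤ 2 := by
  set A : Fin 5 → Set Ω := fun i => {ω | X i ω = 1}
  have hA (i : Fin 5) : MeasurableSet (A i) := hm i (measurableSet_singleton 1)
  have hexcl_ae : ∀ᵐ ω ∂μ, ∀ i, ω ∈ A i → ω ∉ A (i + 1) := by
    refine ae_all_iff.2 fun i => ?_
    filter_upwards [measure_eq_zero_iff_ae_notMem.1 (hexcl i)] with ω hω h₁ h₂ using hω ⟨h₁, h₂⟩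
  have hcard : ∀ᵐ ω ∂μ, #{i ∈ univ | ω ∈ A i} ≤ 2 := hexcl_ae.mono fun ω hω =>
    card_le_two_of_forall_add_one_notMem _ (by simpa using hω)
  have hsum := sum_measure_le_mul_measure_univ_of_ae_card_le (fun i _ => hA i) hcard
  rw [measure_univ, mul_one] at hsum
  rw [← ENNReal.toReal_sum fun i _ => measure_ne_top μ _]
  exact ENNReal.toReal_le_of_le_ofReal zero_le_two (by simpa using hsum)

/-- The KCBS inequality: five jointly distributed `±1`-valued random variables
satisfying the cyclic exclusivity conditions satisfy `Σ Pr[X_i = 1] ≤ 2`. -/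
theorem kcbs_inequality
    {Ω : Type*} [MeasurableSpace Ω] (μ : Measure Ω) [IsProbabilityMeasure μ]
    (X : Fin 5 → Ω → ℝ)
    (hpm : ∀ i ω, X i ω = 1 ∨ X i ω = -1)
    (hm : ∀ i, Measurable (X i))
    (hexcl : ∀ i : Fin 5, μ {ω | X i ω = 1 ∧ X (i + 1) ω = 1} = 0) :
    ∑ i : Fin 5, (μ {ω | X i ω = 1}).toReal ≤ 2 :=
  kcbs_inequality_general μ X hm hexcl
end

section
/- Given two pairs of jointly distributed {-1,+1}-valued random variables (A, C) and (B, D) (the two pairs stochastically unrelated to each other), there always exists a joint distribution (A*, B*, C*, D*) such that (A*, C*) ~ (A, C), (B*, D*) ~ (B, D), and (A*, B*) is a maximal coupling of A and B, i.e., Pr[A* = B*] = 1 - |Pr[A=1] - Pr[B=1]|. -/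
open MeasureTheory

namespace TwoBunchesAux

noncomputable section

def v (b : Bool) : ℝ := if b then 1 else -1

lemma v_eq_iff {a b : Bool} : v a = v b ↔ a = b := by
  cases a <;> cases b <;> simp [v] <;> norm_num

/-- row mass -/
def pm (a : Bool → Bool → ℝ) (α : Bool) : ℝ := a α true + a α false

/-- maximal coupling weights of the two marginals -/
def mw (a b : Bool → Bool → ℝ) : Bool → Bool → ℝ := fun α β =>
  match α, β with
  | true, true => min (pm a true) (pm b true)
  | false, false => min (pm a false) (pm b false)
  | true, false => max (pm a true - pm b true) 0
  | false, true => max (pm b true - pm a true) 0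

/-- joint weight -/
def wt (a b : Bool → Bool → ℝ) (x : Bool × Bool × Bool × Bool) : ℝ :=
  mw a b x.1 x.2.1 * (a x.1 x.2.2.1 / pm a x.1) * (b x.2.1 x.2.2.2 / pm b x.2.1)

/-- the reindexing equivalence grouping `(A,C)` coordinates first -/
def e4 : (Bool × Bool) × (Bool × Bool) ≃ Bool × Bool × Bool × Bool where
  toFun := fun y => (y.1.1, y.2.1, y.1.2, y.2.2)
  invFun := fun x => ((x.1, x.2.2.1), (x.2.1, x.2.2.2))
  left_inv := fun _ => rfl
  right_inv := fun _ => rfl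

/-- the reindexing equivalence grouping `(B,D)` coordinates first -/
def e4' : (Bool × Bool) × (Bool × Bool) ≃ Bool × Bool × Bool × Bool where
  toFun := fun y => (y.2.1, y.1.1, y.2.2, y.1.2)
  invFun := fun x => ((x.2.1, x.2.2.2), (x.1, x.2.2.1))
  left_inv := fun _ => rfl
  right_inv := fun _ => rfl

variable {a b : Bool → Bool → ℝ}

section
variable (ha : ∀ α γ, 0 ≤ a α γ) (hb : ∀ β δ, 0 ≤ b β δ)
  (hsa : pm a true + pm a false = 1) (hsb : pm b true + pm b false = 1)

include ha in
lemma pm_nonneg (α : Bool) : 0 ≤ pm a α := add_nonneg (ha α true) (ha α false)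

include ha in
lemma a_le_pm (α γ : Bool) : a α γ ≤ pm a α := by
  cases γ <;> simp [pm] <;> [linarith [ha α true]; linarith [ha α false]]

include ha hb in
lemma mw_nonneg (α β : Bool) : 0 ≤ mw a b α β := by
  cases α <;> cases β <;> simp [mw, le_max_iff, le_min_iff] <;>
    constructor <;> first
      | exact pm_nonneg ha _
      | exact pm_nonneg hb _

include hsa hsb in
lemma mw_row (α : Bool) : mw a b α true + mw a b α false = pm a α := by
  simp only [pm] at hsa hsb
  cases α <;> simp only [mw, min_def, max_def, pm] <;> split_ifs <;> linarith

include hsa hsb in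
lemma mw_col (β : Bool) : mw a b true β + mw a b false β = pm b β := by
  simp only [pm] at hsa hsb
  cases β <;> simp only [mw, min_def, max_def, pm] <;> split_ifs <;> linarith

include ha hb hsa hsb in
lemma mw_le_row (α β : Bool) : mw a b α β ≤ pm a α := by
  have := mw_row hsa hsb (a := a) (b := b) α
  cases β
  · nlinarith [mw_nonneg ha hb (a := a) (b := b) α true]
  · nlinarith [mw_nonneg ha hb (a := a) (b := b) α false]

include ha hb hsa hsb in
lemma mw_le_col (α β : Bool) : mw a b α β ≤ pm b β := by
  have := mw_col hsa hsb (a := a) (b := b) β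
  cases α
  · nlinarith [mw_nonneg ha hb (a := a) (b := b) true β]
  · nlinarith [mw_nonneg ha hb (a := a) (b := b) false β]

include ha in
lemma cancel_a (α γ : Bool) : pm a α * (a α γ / pm a α) = a α γ := by
  rcases eq_or_ne (pm a α) 0 with h | h
  · have h1 : a α γ = 0 := le_antisymm (h ▸ a_le_pm ha α γ) (ha α γ)
    simp [h, h1]
  · field_simp

include ha hb hsa hsb in
lemma mdiv_col (α β : Bool) : mw a b α β * (pm b β / pm b β) = mw a b α β := by
  rcases eq_or_ne (pm b β) 0 with h | h
  · have h1 : mw a b α β = 0 :=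
      le_antisymm (h ▸ mw_le_col ha hb hsa hsb α β) (mw_nonneg ha hb α β)
    simp [h, h1]
  · rw [div_self h, mul_one]

include ha hb hsa hsb in
lemma mdiv_row (α β : Bool) : mw a b α β * (pm a α / pm a α) = mw a b α β := by
  rcases eq_or_ne (pm a α) 0 with h | h
  · have h1 : mw a b α β = 0 :=
      le_antisymm (h ▸ mw_le_row ha hb hsa hsb α β) (mw_nonneg ha hb α β)
    simp [h, h1]
  · rw [div_self h, mul_one]

include ha hb hsa hsb in
lemma marg1 (α γ : Bool) : ∑ r : Bool × Bool, wt a b (α, r.1, γ, r.2) = a α γ := by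
  have hβ : ∀ β, wt a b (α, β, γ, true) + wt a b (α, β, γ, false)
      = mw a b α β * (a α γ / pm a α) := by
    intro β
    have h0 : wt a b (α, β, γ, true) + wt a b (α, β, γ, false)
        = mw a b α β * (pm b β / pm b β) * (a α γ / pm a α) := by
      simp only [wt, pm]; ring
    rw [h0, mdiv_col ha hb hsa hsb]
  calc ∑ r : Bool × Bool, wt a b (α, r.1, γ, r.2)
      = (mw a b α true + mw a b α false) * (a α γ / pm a α) := by
        rw [Fintype.sum_prod_type]
        simp only [Fintype.sum_bool]
        rw [hβ true, hβ false]; ring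
    _ = a α γ := by rw [mw_row hsa hsb, cancel_a ha]

include ha hb hsa hsb in
lemma marg2 (β δ : Bool) : ∑ r : Bool × Bool, wt a b (r.1, β, r.2, δ) = b β δ := by
  have hα : ∀ α, wt a b (α, β, true, δ) + wt a b (α, β, false, δ)
      = mw a b α β * (b β δ / pm b β) := by
    intro α
    have h0 : wt a b (α, β, true, δ) + wt a b (α, β, false, δ)
        = mw a b α β * (pm a α / pm a α) * (b β δ / pm b β) := by
      simp only [wt, pm]; ring
    rw [h0, mdiv_row ha hb hsa hsb]
  calc ∑ r : Bool × Bool, wt a b (r.1, β, r.2, δ)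
      = (mw a b true β + mw a b false β) * (b β δ / pm b β) := by
        rw [Fintype.sum_prod_type]
        simp only [Fintype.sum_bool]
        rw [hα true, hα false]; ring
    _ = b β δ := by
        rw [mw_col hsa hsb]
        exact cancel_a hb β δ

include ha hb in
lemma wt_nonneg (x : Bool × Bool × Bool × Bool) : 0 ≤ wt a b x := by
  refine mul_nonneg (mul_nonneg (mw_nonneg ha hb _ _) ?_) ?_ <;>
    exact div_nonneg (by first | exact ha _ _ | exact hb _ _)
      (by first | exact pm_nonneg ha _ | exact pm_nonneg hb _)

include ha hb hsa hsb in
lemma diag_wt (α : Bool) : ∑ r : Bool × Bool, wt a b (α, α, r.1, r.2) = mw a b α α := by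
  have h0 : ∑ r : Bool × Bool, wt a b (α, α, r.1, r.2)
      = mw a b α α * (pm a α / pm a α) * (pm b α / pm b α) := by
    rw [Fintype.sum_prod_type]
    simp only [Fintype.sum_bool, wt, pm]; ring
  rcases eq_or_ne (pm a α) 0 with h | h
  · have h1 : mw a b α α = 0 :=
      le_antisymm (h ▸ mw_le_row ha hb hsa hsb α α) (mw_nonneg ha hb α α)
    rw [h0, h1]; ring
  · rw [h0, div_self h, mul_one, mdiv_col ha hb hsa hsb]

include hsa hsb in
lemma mw_diag_sum : mw a b true true + mw a b false false = 1 - |pm a true - pm b true| := by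
  simp only [pm] at hsa hsb ⊢
  rcases le_total (pm a true) (pm b true) with h | h
  · rw [abs_of_nonpos (by simpa [pm] using sub_nonpos.mpr h)]
    simp only [mw, pm] at *
    rw [min_eq_left h, min_eq_right (by linarith)]
    linarith
  · rw [abs_of_nonneg (by simpa [pm] using sub_nonneg.mpr h)]
    simp only [mw, pm] at *
    rw [min_eq_right h, min_eq_left (by linarith)]
    linarith

include ha hb hsa hsb in
lemma wt_total : ∑ x : Bool × Bool × Bool × Bool, wt a b x = 1 := by
  have e : ∑ x : Bool × Bool × Bool × Bool, wt a b x
      = ∑ p : Bool × Bool, ∑ r : Bool × Bool, wt a b (p.1, r.1, p.2, r.2) := by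
    simp only [Fintype.sum_prod_type, Fintype.sum_bool]; ring
  rw [e, Finset.sum_congr rfl fun p _ => marg1 ha hb hsa hsb p.1 p.2]
  simp only [Fintype.sum_prod_type, Fintype.sum_bool]
  simp only [pm] at hsa; linarith

include ha hb hsa hsb in
lemma wt_diag_total : ∑ x : Bool × Bool × Bool × Bool, (if x.1 = x.2.1 then wt a b x else 0)
    = 1 - |pm a true - pm b true| := by
  have e : ∑ x : Bool × Bool × Bool × Bool, (if x.1 = x.2.1 then wt a b x else 0)
      = (∑ r : Bool × Bool, wt a b (true, true, r.1, r.2))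
        + ∑ r : Bool × Bool, wt a b (false, false, r.1, r.2) := by
    simp only [Fintype.sum_prod_type, Fintype.sum_bool]
    simp
  rw [e, diag_wt ha hb hsa hsb true, diag_wt ha hb hsa hsb false,
    mw_diag_sum hsa hsb]

end

lemma binary_pair_apply {Ω₀ : Type*} [MeasurableSpace Ω₀] (ν : Measure Ω₀)
    (X Y : Ω₀ → ℝ) (hX : ∀ ω, X ω = 1 ∨ X ω = -1) (hY : ∀ ω, Y ω = 1 ∨ Y ω = -1)
    (mX : Measurable X) (mY : Measurable Y)
    {s : Set (ℝ × ℝ)} (hs : MeasurableSet s) :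
    ν ((fun ω => (X ω, Y ω)) ⁻¹' s)
      = ∑ p : Bool × Bool,
          s.indicator (fun _ => ν {ω | X ω = v p.1 ∧ Y ω = v p.2}) (v p.1, v p.2) := by
  classical
  set E : Bool × Bool → Set Ω₀ := fun p => {ω | X ω = v p.1 ∧ Y ω = v p.2} with hE
  have hEm : ∀ p, MeasurableSet (E p) := fun p =>
    (mX (measurableSet_singleton (v p.1))).inter (mY (measurableSet_singleton (v p.2)))
  have hcover : (⋃ p : Bool × Bool, E p) = Set.univ := by
    ext ω
    simp only [Set.mem_iUnion, Set.mem_univ, iff_true]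
    rcases hX ω with h1 | h1 <;> rcases hY ω with h2 | h2
    · exact ⟨(true, true), by simp [E, v, h1, h2]⟩
    · exact ⟨(true, false), by simp [E, v, h1, h2]⟩
    · exact ⟨(false, true), by simp [E, v, h1, h2]⟩
    · exact ⟨(false, false), by simp [E, v, h1, h2]⟩
  have hdisj : Pairwise (Function.onFun Disjoint
      fun p => ((fun ω => (X ω, Y ω)) ⁻¹' s) ∩ E p) := by
    intro p q hpq
    refine Set.disjoint_left.2 fun ω hωp hωq => hpq ?_
    have h1 : v p.1 = v q.1 := by rw [← hωp.2.1, ← hωq.2.1]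
    have h2 : v p.2 = v q.2 := by rw [← hωp.2.2, ← hωq.2.2]
    exact Prod.ext (v_eq_iff.mp h1) (v_eq_iff.mp h2)
  have key : (fun ω => (X ω, Y ω)) ⁻¹' s
      = ⋃ p : Bool × Bool, ((fun ω => (X ω, Y ω)) ⁻¹' s) ∩ E p := by
    rw [← Set.inter_iUnion, hcover, Set.inter_univ]
  rw [key, measure_iUnion hdisj fun p => ((mX.prodMk mY) hs).inter (hEm p), tsum_fintype]
  refine Finset.sum_congr rfl fun p _ => ?_
  rw [Set.indicator_apply]
  by_cases hp : (v p.1, v p.2) ∈ s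
  · rw [if_pos hp]
    congr 1
    ext ω
    simp only [Set.mem_inter_iff, Set.mem_preimage, Set.mem_setOf_eq, E]
    exact ⟨fun h => h.2, fun h => ⟨by rw [h.1, h.2]; exact hp, h⟩⟩
  · rw [if_neg hp]
    have hempty : ((fun ω => (X ω, Y ω)) ⁻¹' s) ∩ E p = (∅ : Set Ω₀) := by
      ext ω
      simp only [Set.mem_inter_iff, Set.mem_preimage, Set.mem_empty_iff_false, iff_false, E,
        Set.mem_setOf_eq, not_and]
      intro hmem h1 h2
      exact hp (by rwa [← h1, ← h2])
    rw [hempty, measure_empty]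

end
end TwoBunchesAux

open TwoBunchesAux

/-- A system of two bunches `(A, C)` and `(B, D)` of binary random variables with
the single connection `{A, B}` always admits a maximally noncontextual
description: a joint distribution with the correct pair marginals in which
`(A*, B*)` is a maximal coupling of `A` and `B`. -/
theorem two_bunches_single_connection_noncontextual
    {Ω₁ Ω₂ : Type*} [MeasurableSpace Ω₁] [MeasurableSpace Ω₂]
    (μ₁ : Measure Ω₁) (μ₂ : Measure Ω₂)
    [IsProbabilityMeasure μ₁] [IsProbabilityMeasure μ₂]
    (A C : Ω₁ → ℝ) (B D : Ω₂ → ℝ)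
    (hA : ∀ ω, A ω = 1 ∨ A ω = -1) (hC : ∀ ω, C ω = 1 ∨ C ω = -1)
    (hB : ∀ ω, B ω = 1 ∨ B ω = -1) (hD : ∀ ω, D ω = 1 ∨ D ω = -1)
    (mA : Measurable A) (mC : Measurable C)
    (mB : Measurable B) (mD : Measurable D) :
    ∃ (Ω : Type) (_ : MeasurableSpace Ω) (μ : Measure Ω),
      IsProbabilityMeasure μ ∧
      ∃ (A' B' C' D' : Ω → ℝ),
        Measurable A' ∧ Measurable B' ∧ Measurable C' ∧ Measurable D' ∧
        Measure.map (fun ω => (A' ω, C' ω)) μ = Measure.map (fun ω => (A ω, C ω)) μ₁ ∧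
        Measure.map (fun ω => (B' ω, D' ω)) μ = Measure.map (fun ω => (B ω, D ω)) μ₂ ∧
        (μ {ω | A' ω = B' ω}).toReal =
          1 - |(μ₁ {ω | A ω = 1}).toReal - (μ₂ {ω | B ω = 1}).toReal| := by
  classical
  set a : Bool → Bool → ℝ := fun α γ => (μ₁ {ω | A ω = v α ∧ C ω = v γ}).toReal with hadef
  set b : Bool → Bool → ℝ := fun β δ => (μ₂ {ω | B ω = v β ∧ D ω = v δ}).toReal with hbdef
  have ha : ∀ α γ, 0 ≤ a α γ := fun _ _ => ENNReal.toReal_nonneg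
  have hb : ∀ β δ, 0 ≤ b β δ := fun _ _ => ENNReal.toReal_nonneg
  -- total masses of the two distributions
  have hsa : pm a true + pm a false = 1 := by
    have h := binary_pair_apply μ₁ A C hA hC mA mC MeasurableSet.univ
    simp only [Set.preimage_univ, Set.indicator_univ, measure_univ] at h
    have h' := congrArg ENNReal.toReal h
    rw [ENNReal.toReal_sum (fun p _ => measure_ne_top μ₁ _)] at h'
    simp only [Fintype.sum_prod_type, Fintype.sum_bool, ENNReal.toReal_one] at h'
    simp only [pm, hadef]
    linarith
  have hsb : pm b true + pm b false = 1 := by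
    have h := binary_pair_apply μ₂ B D hB hD mB mD MeasurableSet.univ
    simp only [Set.preimage_univ, Set.indicator_univ, measure_univ] at h
    have h' := congrArg ENNReal.toReal h
    rw [ENNReal.toReal_sum (fun p _ => measure_ne_top μ₂ _)] at h'
    simp only [Fintype.sum_prod_type, Fintype.sum_bool, ENNReal.toReal_one] at h'
    simp only [pm, hbdef]
    linarith
  -- the coupling measure
  set W : Bool × Bool × Bool × Bool → ENNReal := fun x => ENNReal.ofReal (wt a b x) with hWdef
  set μ : Measure (Bool × Bool × Bool × Bool) :=
    ∑ x : Bool × Bool × Bool × Bool, W x • Measure.dirac x with hμdef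
  have happ : ∀ s : Set (Bool × Bool × Bool × Bool),
      μ s = ∑ x : Bool × Bool × Bool × Bool, if x ∈ s then W x else 0 := by
    intro s
    rw [hμdef, Measure.finset_sum_apply]
    refine Finset.sum_congr rfl fun x _ => ?_
    rw [Measure.smul_apply, Measure.dirac_apply, Set.indicator_apply]
    by_cases hx : x ∈ s <;> simp [hx]
  have hofA : ∀ p : Bool × Bool,
      (∑ r : Bool × Bool, W (p.1, r.1, p.2, r.2)) = μ₁ {ω | A ω = v p.1 ∧ C ω = v p.2} := by
    intro p
    rw [hWdef]
    rw [← ENNReal.ofReal_sum_of_nonneg (fun r _ => wt_nonneg ha hb _),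
      marg1 ha hb hsa hsb p.1 p.2, hadef]
    exact ENNReal.ofReal_toReal (measure_ne_top μ₁ _)
  have hofB : ∀ p : Bool × Bool,
      (∑ r : Bool × Bool, W (r.1, p.1, r.2, p.2)) = μ₂ {ω | B ω = v p.1 ∧ D ω = v p.2} := by
    intro p
    rw [hWdef]
    rw [← ENNReal.ofReal_sum_of_nonneg (fun r _ => wt_nonneg ha hb _),
      marg2 ha hb hsa hsb p.1 p.2, hbdef]
    exact ENNReal.ofReal_toReal (measure_ne_top μ₂ _)
  have hprob : IsProbabilityMeasure μ := by
    constructor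
    rw [happ]
    simp only [Set.mem_univ, if_true, hWdef]
    rw [← ENNReal.ofReal_sum_of_nonneg (fun x _ => wt_nonneg ha hb x),
      wt_total ha hb hsa hsb, ENNReal.ofReal_one]
  refine ⟨Bool × Bool × Bool × Bool, inferInstance, μ, hprob,
    fun x => v x.1, fun x => v x.2.1, fun x => v x.2.2.1, fun x => v x.2.2.2,
    Measurable.of_discrete, Measurable.of_discrete, Measurable.of_discrete,
    Measurable.of_discrete, ?_, ?_, ?_⟩
  · -- first marginal
    ext s hs
    rw [Measure.map_apply Measurable.of_discrete hs, Measure.map_apply (mA.prodMk mC) hs,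
      binary_pair_apply μ₁ A C hA hC mA mC hs, happ]
    rw [← Equiv.sum_comp e4 (fun x => if x ∈ (fun x : Bool × Bool × Bool × Bool =>
      (v x.1, v x.2.2.1)) ⁻¹' s then W x else 0), Fintype.sum_prod_type]
    refine Finset.sum_congr rfl fun p _ => ?_
    rw [Set.indicator_apply]
    by_cases hp : (v p.1, v p.2) ∈ s
    · rw [if_pos hp, ← hofA p]
      refine Finset.sum_congr rfl fun r _ => ?_
      rw [if_pos]
      · rfl
      · exact hp
    · rw [if_neg hp]
      refine Finset.sum_eq_zero fun r _ => ?_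
      rw [if_neg]
      exact fun hmem => hp hmem
  · -- second marginal
    ext s hs
    rw [Measure.map_apply Measurable.of_discrete hs, Measure.map_apply (mB.prodMk mD) hs,
      binary_pair_apply μ₂ B D hB hD mB mD hs, happ]
    rw [← Equiv.sum_comp e4' (fun x => if x ∈ (fun x : Bool × Bool × Bool × Bool =>
      (v x.2.1, v x.2.2.2)) ⁻¹' s then W x else 0), Fintype.sum_prod_type]
    refine Finset.sum_congr rfl fun p _ => ?_
    rw [Set.indicator_apply]
    by_cases hp : (v p.1, v p.2) ∈ s
    · rw [if_pos hp, ← hofB p]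
      refine Finset.sum_congr rfl fun r _ => ?_
      rw [if_pos]
      · rfl
      · exact hp
    · rw [if_neg hp]
      refine Finset.sum_eq_zero fun r _ => ?_
      rw [if_neg]
      exact fun hmem => hp hmem
  · -- maximal coupling probability
    have hdiag : μ {x : Bool × Bool × Bool × Bool | v x.1 = v x.2.1}
        = ENNReal.ofReal (1 - |pm a true - pm b true|) := by
      rw [happ, ← wt_diag_total ha hb hsa hsb,
        ENNReal.ofReal_sum_of_nonneg
          (fun x _ => by split_ifs with h; exacts [wt_nonneg ha hb x, le_rfl])]
      refine Finset.sum_congr rfl fun x _ => ?_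
      by_cases hx : x.1 = x.2.1 <;>
        simp [Set.mem_setOf_eq, v_eq_iff, hx, hWdef]
    have h1 : 0 ≤ pm a true := pm_nonneg ha true
    have h2 : pm a true ≤ 1 := by
      have := pm_nonneg ha false; linarith
    have h3 : 0 ≤ pm b true := pm_nonneg hb true
    have h4 : pm b true ≤ 1 := by
      have := pm_nonneg hb false; linarith
    have hnn : 0 ≤ 1 - |pm a true - pm b true| := by
      have habs : |pm a true - pm b true| ≤ 1 := abs_le.mpr ⟨by linarith, by linarith⟩
      linarith
    have hsplit1 : μ₁ {ω | A ω = 1}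
        = μ₁ {ω | A ω = v true ∧ C ω = v true} + μ₁ {ω | A ω = v true ∧ C ω = v false} := by
      have hset : {ω | A ω = 1}
          = {ω | A ω = v true ∧ C ω = v true} ∪ {ω | A ω = v true ∧ C ω = v false} := by
        ext ω
        simp only [Set.mem_setOf_eq, Set.mem_union, v, if_true, if_false]
        constructor
        · intro h
          rcases hC ω with hc | hc
          exacts [Or.inl ⟨h, hc⟩, Or.inr ⟨h, hc⟩]
        · rintro (⟨h, _⟩ | ⟨h, _⟩) <;> exact h
      rw [hset, measure_union]
      · refine Set.disjoint_left.2 fun ω hω1 hω2 => ?_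
        have hc1 := hω1.2
        have hc2 := hω2.2
        simp only [v, if_true, if_false] at hc1 hc2
        rw [hc1] at hc2
        norm_num at hc2
      · exact (mA (measurableSet_singleton _)).inter (mC (measurableSet_singleton _))
    have hsplit2 : μ₂ {ω | B ω = 1}
        = μ₂ {ω | B ω = v true ∧ D ω = v true} + μ₂ {ω | B ω = v true ∧ D ω = v false} := by
      have hset : {ω | B ω = 1}
          = {ω | B ω = v true ∧ D ω = v true} ∪ {ω | B ω = v true ∧ D ω = v false} := by
        ext ω
        simp only [Set.mem_setOf_eq, Set.mem_union, v, if_true, if_false]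
        constructor
        · intro h
          rcases hD ω with hd | hd
          exacts [Or.inl ⟨h, hd⟩, Or.inr ⟨h, hd⟩]
        · rintro (⟨h, _⟩ | ⟨h, _⟩) <;> exact h
      rw [hset, measure_union]
      · refine Set.disjoint_left.2 fun ω hω1 hω2 => ?_
        have hd1 := hω1.2
        have hd2 := hω2.2
        simp only [v, if_true, if_false] at hd1 hd2
        rw [hd1] at hd2
        norm_num at hd2
      · exact (mB (measurableSet_singleton _)).inter (mD (measurableSet_singleton _))
    have hpa : (μ₁ {ω | A ω = 1}).toReal = pm a true := by
      rw [hsplit1, ENNReal.toReal_add (measure_ne_top _ _) (measure_ne_top _ _)]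
      simp [pm, hadef]
    have hpb : (μ₂ {ω | B ω = 1}).toReal = pm b true := by
      rw [hsplit2, ENNReal.toReal_add (measure_ne_top _ _) (measure_ne_top _ _)]
      simp [pm, hbdef]
    calc (μ {x : Bool × Bool × Bool × Bool | v x.1 = v x.2.1}).toReal
        = 1 - |pm a true - pm b true| := by rw [hdiag, ENNReal.toReal_ofReal hnn]
      _ = 1 - |(μ₁ {ω | A ω = 1}).toReal - (μ₂ {ω | B ω = 1}).toReal| := by
          rw [hpa, hpb]
end
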